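/- Let μ ∈ ℝ, σ > 0 and β ≥ 0. Then the (2,2) entry of the matrix K_β(μ,σ) = ∫₀^∞ u uᵀ f_{μ,σ}^{1+2β} dx − ξ ξᵀ (where ξ = ∫₀^∞ u f_{μ,σ}^{1+β} dx) satisfies ∫₀^∞ u₂(x)² f_{μ,σ}(x)^{1+2β} dx − ( ∫₀^∞ u₂(x) f_{μ,σ}(x)^{1+β} dx )² = (L*(β,μ,σ)/σ) · ( 16β⁴σ⁴/(1+2β)² + 24σ²β²/(1+2β) + 4β²(1 − 2σ²) + 2 ) − L**(β,μ,σ) · β²(βσ² − β − 1)²/(1+β)². -/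

import Mathlib

open Real MeasureTheory Set

/-- The log-normal density with parameters `μ` and `σ`. -/
noncomputable def lognormalPdf (μ σ : ℝ) (x : ℝ) : ℝ :=
  if 0 < x then
    (1 / (x * σ * Real.sqrt (2 * Real.pi))) * Real.exp (-(Real.log x - μ) ^ 2 / (2 * σ ^ 2))
  else 0

/-- First component of the score function of the log-normal model. -/
noncomputable def scoreU1 (μ σ : ℝ) (x : ℝ) : ℝ := (Real.log x - μ) / σ ^ 2

/-- Second component of the score function of the log-normal model. -/
noncomputable def scoreU2 (μ σ : ℝ) (x : ℝ) : ℝ := ((Real.log x - μ) ^ 2 - σ ^ 2) / σ ^ 3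

/-- The factor `L*(β, μ, σ)`. -/
noncomputable def Lstar (β μ σ : ℝ) : ℝ :=
  Real.exp (-2 * β * μ + 2 * β ^ 2 * σ ^ 2 / (1 + 2 * β)) /
    (σ ^ (2 * β + 1) * (2 * Real.pi) ^ β * (1 + 2 * β) ^ ((5 : ℝ) / 2))

/-- The factor `L**(β, μ, σ)`. -/
noncomputable def Lstarstar (β μ σ : ℝ) : ℝ :=
  Real.exp (-2 * β * μ + β ^ 2 * σ ^ 2 / (1 + β)) /
    (σ ^ (2 * β + 2) * (2 * Real.pi) ^ β * (1 + β) ^ 3)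

/-!
Substituting `x = exp (μ + t)` turns `f_{μ,σ}(x) ^ p dx` into a constant times
`exp ((1 - p) t - p t² / (2σ²)) dt`; completing the square recentres this Gaussian at
`(1 - p) σ² / p` with variance `σ² / p`. Since `u₂` is a quadratic polynomial in `t`, both
integrals reduce to Gaussian moments of order at most four. The constants `L*` and `L**` are
rescalings of the mass `∫ f^p` at `p = 1 + 2β` and of its square at `p = 1 + β`.
-/

theorem integral_pow_mul_exp_neg_mul_sq_of_odd (a : ℝ) {k : ℕ} (hk : Odd k) :
    ∫ x : ℝ, x ^ k * exp (-a * x ^ 2) = 0 := by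
  have h := integral_neg_eq_self (fun x : ℝ => x ^ k * exp (-a * x ^ 2)) volume
  simp only [hk.neg_pow, neg_sq, neg_mul, integral_neg] at h ⊢
  linarith

open scoped Nat in
theorem integral_pow_two_mul_mul_exp_neg_mul_sq {a : ℝ} (ha : 0 < a) (j : ℕ) :
    ∫ x : ℝ, x ^ (2 * j) * exp (-a * x ^ 2) = (2 * j - 1 : ℕ)‼ / (2 * a) ^ j * √(π / a) := by
  have hIoi : ∫ x in Ioi (0 : ℝ), x ^ (2 * j) * exp (-a * x ^ 2)
      = a ^ (-((2 * j : ℝ) + 1) / 2) * (1 / 2) * Gamma (((2 * j : ℝ) + 1) / 2) := by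
    rw [← integral_rpow_mul_exp_neg_mul_rpow two_pos (neg_one_lt_zero.trans_le (by positivity)) ha]
    refine setIntegral_congr_fun measurableSet_Ioi fun x _ => ?_
    norm_cast
  calc ∫ x : ℝ, x ^ (2 * j) * exp (-a * x ^ 2)
      = ∫ x : ℝ, (fun t : ℝ => t ^ (2 * j) * exp (-a * t ^ 2)) |x| := by
        simp only [(even_two_mul j).pow_abs, sq_abs]
    _ = 2 * ∫ x in Ioi (0 : ℝ), x ^ (2 * j) * exp (-a * x ^ 2) :=
        integral_comp_abs (f := fun t : ℝ => t ^ (2 * j) * exp (-a * t ^ 2))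
    _ = _ := by
      rw [hIoi,
        show ((2 * j : ℝ) + 1) / 2 = j + 1 / 2 by ring, Gamma_nat_add_half,
        show -((2 * j : ℝ) + 1) / 2 = -((j : ℝ) + 1 / 2) by ring, rpow_neg ha.le, rpow_add ha,
        rpow_natCast, ← sqrt_eq_rpow, sqrt_div' _ ha.le]
      field_simp
      ring_nf

theorem integrable_pow_mul_exp_neg_mul_sq {a : ℝ} (ha : 0 < a) (k : ℕ) :
    Integrable fun x : ℝ => x ^ k * exp (-a * x ^ 2) := by
  simpa using integrable_rpow_mul_exp_neg_mul_sq ha (neg_one_lt_zero.trans_le k.cast_nonneg)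

theorem integral_quartic_mul_exp_neg_mul_sq {a : ℝ} (ha : 0 < a) (c₀ c₁ c₂ c₃ c₄ : ℝ) :
    ∫ s : ℝ, (c₀ + c₁ * s + c₂ * s ^ 2 + c₃ * s ^ 3 + c₄ * s ^ 4) * exp (-a * s ^ 2)
      = √(π / a) * (c₀ + c₂ / (2 * a) + 3 * c₄ / (4 * a ^ 2)) := by
  have hI := integrable_pow_mul_exp_neg_mul_sq ha
  have expand : ∀ s : ℝ, (c₀ + c₁ * s + c₂ * s ^ 2 + c₃ * s ^ 3 + c₄ * s ^ 4) * exp (-a * s ^ 2)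
      = c₀ * (s ^ (2 * 0) * exp (-a * s ^ 2)) + c₁ * (s ^ 1 * exp (-a * s ^ 2))
        + c₂ * (s ^ (2 * 1) * exp (-a * s ^ 2)) + c₃ * (s ^ 3 * exp (-a * s ^ 2))
        + c₄ * (s ^ (2 * 2) * exp (-a * s ^ 2)) := fun s => by ring
  rw [integral_congr_ae (Filter.Eventually.of_forall expand), integral_add, integral_add,
    integral_add, integral_add]
  · rw [integral_const_mul, integral_const_mul, integral_const_mul, integral_const_mul,
      integral_const_mul, integral_pow_two_mul_mul_exp_neg_mul_sq ha,
      integral_pow_two_mul_mul_exp_neg_mul_sq ha, integral_pow_two_mul_mul_exp_neg_mul_sq ha,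
      integral_pow_mul_exp_neg_mul_sq_of_odd a odd_one,
      integral_pow_mul_exp_neg_mul_sq_of_odd a (by decide : Odd 3)]
    norm_num
    field_simp
    ring
  all_goals repeat' first | exact (hI _).const_mul _ | refine Integrable.add ?_ ?_

theorem integral_mul_exp_mul_sub_mul_sq (g : ℝ → ℝ) {a : ℝ} (ha : a ≠ 0) (b : ℝ) :
    ∫ t : ℝ, g t * exp (b * t - a * t ^ 2)
      = exp (b ^ 2 / (4 * a)) * ∫ s : ℝ, g (s + b / (2 * a)) * exp (-a * s ^ 2) := by
  rw [← integral_const_mul]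
  conv_rhs => rw [← integral_sub_right_eq_self _ (b / (2 * a))]
  congr 1 with t
  rw [sub_add_cancel, mul_left_comm, ← exp_add]
  congr 2
  field_simp
  ring

theorem integral_Ioi_eq_integral_comp_exp (g : ℝ → ℝ) :
    ∫ x in Ioi (0 : ℝ), g x = ∫ y : ℝ, exp y * g (exp y) := by
  have h := integral_image_eq_integral_abs_deriv_smul MeasurableSet.univ
    (fun x _ => (hasDerivAt_exp x).hasDerivWithinAt) exp_injective.injOn g
  rw [image_univ, range_exp] at h
  simpa [abs_of_pos (exp_pos _)] using h

theorem lognormalPdf_exp (μ σ y : ℝ) :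
    lognormalPdf μ σ (exp y) = exp (-y - (y - μ) ^ 2 / (2 * σ ^ 2)) / (σ * √(2 * π)) := by
  rw [lognormalPdf, if_pos (exp_pos y), log_exp, exp_sub, exp_neg, neg_div, exp_neg]
  field_simp

theorem integral_comp_log_mul_lognormalPdf_rpow_eq_integral_mul_exp {μ σ p : ℝ} (hσ : 0 < σ)
    (g : ℝ → ℝ) :
    ∫ x in Ioi (0 : ℝ), g (log x - μ) * lognormalPdf μ σ x ^ p
      = exp ((1 - p) * μ) / (σ * √(2 * π)) ^ p *
        ∫ t : ℝ, g t * exp ((1 - p) * t - p / (2 * σ ^ 2) * t ^ 2) := by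
  rw [integral_Ioi_eq_integral_comp_exp, ← integral_const_mul]
  conv_rhs => rw [← integral_sub_right_eq_self _ μ]
  congr 1 with y
  rw [log_exp, lognormalPdf_exp, div_rpow (exp_pos _).le (by positivity), ← exp_mul]
  have hexp : exp y * exp ((-y - (y - μ) ^ 2 / (2 * σ ^ 2)) * p)
      = exp ((1 - p) * μ) * exp ((1 - p) * (y - μ) - p / (2 * σ ^ 2) * (y - μ) ^ 2) := by
    rw [← exp_add, ← exp_add]
    congr 1
    field_simp
    ring
  linear_combination g (y - μ) / (σ * √(2 * π)) ^ p * hexp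

theorem integral_comp_log_mul_lognormalPdf_rpow_eq_integral_mul_gaussian {μ σ p : ℝ} (hσ : 0 < σ)
    (hp : 0 < p) (g : ℝ → ℝ) :
    ∫ x in Ioi (0 : ℝ), g (log x - μ) * lognormalPdf μ σ x ^ p
      = exp ((1 - p) * μ + (1 - p) ^ 2 * σ ^ 2 / (2 * p)) / (σ * √(2 * π)) ^ p *
        ∫ s : ℝ, g (s + (1 - p) * σ ^ 2 / p) * exp (-(p / (2 * σ ^ 2)) * s ^ 2) := by
  have ha : p / (2 * σ ^ 2) ≠ 0 := by positivity
  have hm : (1 - p) / (2 * (p / (2 * σ ^ 2))) = (1 - p) * σ ^ 2 / p := by field_simp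
  have hv : (1 - p) ^ 2 / (4 * (p / (2 * σ ^ 2))) = (1 - p) ^ 2 * σ ^ 2 / (2 * p) := by
    field_simp
    ring
  rw [integral_comp_log_mul_lognormalPdf_rpow_eq_integral_mul_exp hσ g,
    integral_mul_exp_mul_sub_mul_sq g ha, hm, hv, exp_add]
  ring

/-- The value of `∫₀^∞ f_{μ,σ}(x) ^ p dx` for `σ, p > 0`. -/
noncomputable def lognormalRpowMass (μ σ p : ℝ) : ℝ :=
  exp ((1 - p) * μ + (1 - p) ^ 2 * σ ^ 2 / (2 * p)) / (σ * √(2 * π)) ^ p *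
    √(π / (p / (2 * σ ^ 2)))

theorem integral_scoreU2_mul_lognormalPdf_rpow {μ σ p : ℝ} (hσ : 0 < σ) (hp : 0 < p) :
    ∫ x in Ioi (0 : ℝ), scoreU2 μ σ x * lognormalPdf μ σ x ^ p
      = lognormalRpowMass μ σ p * (((1 - p) * σ ^ 2 / p) ^ 2 - σ ^ 2 + σ ^ 2 / p) / σ ^ 3 := by
  refine (integral_comp_log_mul_lognormalPdf_rpow_eq_integral_mul_gaussian hσ hp
    fun t => (t ^ 2 - σ ^ 2) / σ ^ 3).trans ?_
  set m := (1 - p) * σ ^ 2 / p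
  have hquartic : ∀ s : ℝ, ((s + m) ^ 2 - σ ^ 2) / σ ^ 3
      = (m ^ 2 - σ ^ 2) / σ ^ 3 + 2 * m / σ ^ 3 * s + 1 / σ ^ 3 * s ^ 2 + 0 * s ^ 3 + 0 * s ^ 4 :=
    fun s => by ring
  simp only [hquartic]
  rw [integral_quartic_mul_exp_neg_mul_sq (by positivity), lognormalRpowMass]
  field_simp
  ring

theorem integral_scoreU2_sq_mul_lognormalPdf_rpow {μ σ p : ℝ} (hσ : 0 < σ) (hp : 0 < p) :
    ∫ x in Ioi (0 : ℝ), scoreU2 μ σ x ^ 2 * lognormalPdf μ σ x ^ p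
      = lognormalRpowMass μ σ p * ((((1 - p) * σ ^ 2 / p) ^ 2 - σ ^ 2) ^ 2
          + (6 * ((1 - p) * σ ^ 2 / p) ^ 2 - 2 * σ ^ 2) * σ ^ 2 / p + 3 * σ ^ 4 / p ^ 2)
        / σ ^ 6 := by
  refine (integral_comp_log_mul_lognormalPdf_rpow_eq_integral_mul_gaussian hσ hp
    fun t => ((t ^ 2 - σ ^ 2) / σ ^ 3) ^ 2).trans ?_
  set m := (1 - p) * σ ^ 2 / p
  have hquartic : ∀ s : ℝ, (((s + m) ^ 2 - σ ^ 2) / σ ^ 3) ^ 2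
      = (m ^ 2 - σ ^ 2) ^ 2 / σ ^ 6 + 4 * m * (m ^ 2 - σ ^ 2) / σ ^ 6 * s
        + (6 * m ^ 2 - 2 * σ ^ 2) / σ ^ 6 * s ^ 2 + 4 * m / σ ^ 6 * s ^ 3 + 1 / σ ^ 6 * s ^ 4 :=
    fun s => by field_simp; ring
  simp only [hquartic]
  rw [integral_quartic_mul_exp_neg_mul_sq (by positivity), lognormalRpowMass]
  field_simp
  ring

theorem sqrt_pi_div_div_two_mul_sq {σ : ℝ} (hσ : 0 < σ) (p : ℝ) :
    √(π / (p / (2 * σ ^ 2))) = σ * √(2 * π) / √p := by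
  rw [div_div_eq_mul_div, sqrt_div (by positivity),
    show π * (2 * σ ^ 2) = σ ^ 2 * (2 * π) by ring, sqrt_mul (sq_nonneg σ), sqrt_sq hσ.le]

theorem Lstar_eq_lognormalRpowMass {β μ σ : ℝ} (hσ : 0 < σ) (hβ : 0 < 1 + 2 * β) :
    Lstar β μ σ = lognormalRpowMass μ σ (1 + 2 * β) / (σ * (1 + 2 * β) ^ 2) := by
  have h2π : 0 < 2 * π := two_pi_pos
  have hpow : (σ * √(2 * π)) ^ (1 + 2 * β) = σ ^ (2 * β + 1) * √(2 * π) * (2 * π) ^ β := by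
    rw [mul_rpow hσ.le (sqrt_nonneg _), add_comm 1, rpow_add_one (sqrt_pos.2 h2π).ne',
      sqrt_eq_rpow, ← rpow_mul h2π.le]
    ring_nf
  have hpow' : (1 + 2 * β) ^ ((5 : ℝ) / 2) = (1 + 2 * β) ^ 2 * √(1 + 2 * β) := by
    rw [sqrt_eq_rpow, ← rpow_natCast, ← rpow_add hβ]
    norm_num
  rw [Lstar, lognormalRpowMass, hpow, hpow', sqrt_pi_div_div_two_mul_sq hσ]
  have hexp : (1 - (1 + 2 * β)) * μ + (1 - (1 + 2 * β)) ^ 2 * σ ^ 2 / (2 * (1 + 2 * β))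
      = -2 * β * μ + 2 * β ^ 2 * σ ^ 2 / (1 + 2 * β) := by
    field_simp
    ring
  rw [hexp]
  field_simp

theorem Lstarstar_eq_lognormalRpowMass {β μ σ : ℝ} (hσ : 0 < σ) (hβ : 0 < 1 + β) :
    Lstarstar β μ σ = lognormalRpowMass μ σ (1 + β) ^ 2 / (σ ^ 2 * (1 + β) ^ 2) := by
  have h2π : 0 < 2 * π := two_pi_pos
  have hpow : ((σ * √(2 * π)) ^ (1 + β)) ^ 2 = σ ^ (2 * β + 2) * (2 * π) * (2 * π) ^ β := by
    rw [← rpow_natCast, ← rpow_mul (by positivity), mul_rpow hσ.le (sqrt_nonneg _),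
      sqrt_eq_rpow, ← rpow_mul h2π.le, Nat.cast_ofNat, show (1 + β) * 2 = 2 * β + 2 by ring,
      show 1 / 2 * (2 * β + 2) = β + 1 by ring, rpow_add_one h2π.ne']
    ring
  rw [Lstarstar, lognormalRpowMass, sqrt_pi_div_div_two_mul_sq hσ, mul_pow, div_pow, hpow,
    div_pow, mul_pow, sq_sqrt h2π.le, sq_sqrt hβ.le, ← exp_nat_mul]
  have hexp : (2 : ℕ) * ((1 - (1 + β)) * μ + (1 - (1 + β)) ^ 2 * σ ^ 2 / (2 * (1 + β)))
      = -2 * β * μ + β ^ 2 * σ ^ 2 / (1 + β) := by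
    field_simp
    ring
  rw [hexp]
  field_simp

/-- The `(2,2)` entry of the matrix `K_β(μ,σ)`. -/
theorem K_entry_22 (μ σ β : ℝ) (hσ : 0 < σ) (hβ : 0 ≤ β) :
    (∫ x in Ioi (0 : ℝ), scoreU2 μ σ x ^ 2 * lognormalPdf μ σ x ^ (1 + 2 * β)) -
        (∫ x in Ioi (0 : ℝ), scoreU2 μ σ x * lognormalPdf μ σ x ^ (1 + β)) ^ 2 =
      (Lstar β μ σ / σ) *
          (16 * β ^ 4 * σ ^ 4 / (1 + 2 * β) ^ 2 + 24 * σ ^ 2 * β ^ 2 / (1 + 2 * β) +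
            4 * β ^ 2 * (1 - 2 * σ ^ 2) + 2) -
        Lstarstar β μ σ * (β ^ 2 * (β * σ ^ 2 - β - 1) ^ 2 / (1 + β) ^ 2) := by
  have h₁ : 0 < 1 + 2 * β := by linarith
  have h₂ : 0 < 1 + β := by linarith
  rw [integral_scoreU2_sq_mul_lognormalPdf_rpow hσ h₁,
    integral_scoreU2_mul_lognormalPdf_rpow hσ h₂, Lstar_eq_lognormalRpowMass hσ h₁,
    Lstarstar_eq_lognormalRpowMass hσ h₂]
  field_simp
  ring
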